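/- Let d ∈ ℕ, α > 0, σ > 0, let μ be a probability measure on ℝ^d, and let X₁, X₂, … be i.i.d. random vectors with law μ. Fix x ∈ ℝ^d, write φ_σ(u) = (2πσ²)^{−d/2} exp(−‖u‖²/(2σ²)), and fix ε with 0 < ε < E[φ_σ(x − α X₁)]. Then, almost surely, (1/σ²) · ( −x + α · ( ∑_{i=1}^m φ_σ(x − α X_i) X_i ) / max( ∑_{i=1}^m φ_σ(x − α X_i), m ε ) ) converges as m → ∞ to ∇ log p(x), where p(x) = ∫_{ℝ^d} φ_σ(x − α y) dμ(y). In particular, the thresholded ratio estimator of the score is strongly consistent. -/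

import Mathlib

open MeasureTheory ProbabilityTheory Real Filter

/-- The centered Gaussian density with scale `σ` on `ℝ^d`:
`φ_σ(x) = (2πσ²)^{−d/2} exp(−‖x‖²/(2σ²))`. -/
noncomputable def gaussDensity (d : ℕ) (σ : ℝ) (x : EuclideanSpace ℝ (Fin d)) : ℝ :=
  (2 * π * σ ^ 2) ^ (-(d : ℝ) / 2) * Real.exp (-‖x‖ ^ 2 / (2 * σ ^ 2))

/-! The score is `(1/σ²)(−x + α E[φ_σ(x − αX) X] / E[φ_σ(x − αX)])`: differentiating
`p(x) = E[φ_σ(x − αX)]` under the integral sign is legitimate because both `φ_σ` and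
`u ↦ φ_σ(u) ‖u‖` are bounded. By the strong law of large numbers, `m⁻¹ ∑ φ_σ(x − αXᵢ)` and
`m⁻¹ ∑ φ_σ(x − αXᵢ) Xᵢ` converge almost surely to the two expectations, and since
`ε < E[φ_σ(x − αX)]` the floor `max(·, ε)` does not change the limit of the normalized
denominator. -/

open Topology

theorem mul_exp_neg_sq_div_le {σ : ℝ} (hσ : 0 < σ) (t : ℝ) :
    t * exp (-t ^ 2 / (2 * σ ^ 2)) ≤ σ := by
  set u := t ^ 2 / (2 * σ ^ 2)
  have ht : t ≤ σ * (1 + u) := by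
    have : σ * (1 + u) - t = ((t - σ) ^ 2 + σ ^ 2) / (2 * σ) := by
      simp only [u]; field_simp; ring
    rw [← sub_nonneg, this]
    positivity
  have hexp : σ * (1 + u) ≤ σ * exp u := by
    gcongr; linarith [add_one_le_exp u]
  rw [neg_div, exp_neg, ← div_eq_mul_inv, div_le_iff₀ (exp_pos u)]
  linarith

theorem HasGradientAt.log {F : Type*} [NormedAddCommGroup F] [InnerProductSpace ℝ F]
    [CompleteSpace F] {f : F → ℝ} {g x : F} (hf : HasGradientAt f g x) (hx : f x ≠ 0) :
    HasGradientAt (fun y => log (f y)) ((f x)⁻¹ • g) x := by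
  rw [hasGradientAt_iff_hasFDerivAt, map_smulₛₗ]
  exact hf.hasFDerivAt.log hx

section Gaussian

variable {d : ℕ} {σ : ℝ}

theorem gaussDensity_nonneg (u : EuclideanSpace ℝ (Fin d)) : 0 ≤ gaussDensity d σ u := by
  unfold gaussDensity; positivity

theorem gaussDensity_le (u : EuclideanSpace ℝ (Fin d)) :
    gaussDensity d σ u ≤ (2 * π * σ ^ 2) ^ (-(d : ℝ) / 2) := by
  unfold gaussDensity
  refine mul_le_of_le_one_right (by positivity) (exp_le_one_iff.2 ?_)
  exact div_nonpos_of_nonpos_of_nonneg (neg_nonpos.2 (sq_nonneg _)) (by positivity)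

theorem gaussDensity_mul_norm_le (hσ : 0 < σ) (u : EuclideanSpace ℝ (Fin d)) :
    gaussDensity d σ u * ‖u‖ ≤ (2 * π * σ ^ 2) ^ (-(d : ℝ) / 2) * σ := by
  unfold gaussDensity
  rw [mul_assoc, mul_comm (exp _)]
  gcongr
  exact mul_exp_neg_sq_div_le hσ ‖u‖

@[fun_prop]
theorem continuous_gaussDensity : Continuous (gaussDensity d σ) := by
  unfold gaussDensity; fun_prop

theorem hasGradientAt_gaussDensity (hσ : 0 < σ) (u : EuclideanSpace ℝ (Fin d)) :
    HasGradientAt (gaussDensity d σ) ((-gaussDensity d σ u / σ ^ 2) • u) u := by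
  have h := (((hasStrictFDerivAt_norm_sq u).hasFDerivAt.const_mul (-(2 * σ ^ 2)⁻¹)).exp).const_mul
    ((2 * π * σ ^ 2) ^ (-(d : ℝ) / 2))
  have hφ : gaussDensity d σ =
      fun v => (2 * π * σ ^ 2) ^ (-(d : ℝ) / 2) * exp (-(2 * σ ^ 2)⁻¹ * ‖v‖ ^ 2) := by
    ext v; unfold gaussDensity; congr 2; ring
  rw [hasGradientAt_iff_hasFDerivAt]
  refine (hφ ▸ h).congr_fderiv ?_
  ext v
  simp only [mul_inv_rev, neg_mul, neg_smul, smul_neg, neg_apply, smul_apply, coe_innerSL_apply,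
    nsmul_eq_mul, Nat.cast_ofNat, smul_eq_mul, hφ, map_smul, InnerProductSpace.toDual_apply_apply]
  field_simp

end Gaussian

section Smoothing

variable {d : ℕ} {σ : ℝ} {μ : Measure (EuclideanSpace ℝ (Fin d))} [IsFiniteMeasure μ]
  (α : ℝ) (x : EuclideanSpace ℝ (Fin d))

theorem integrable_gaussDensity_sub_smul :
    Integrable (fun y => gaussDensity d σ (x - α • y)) μ := by
  refine .of_bound (by fun_prop) ((2 * π * σ ^ 2) ^ (-(d : ℝ) / 2)) (ae_of_all _ fun y => ?_)
  rw [norm_of_nonneg (gaussDensity_nonneg _)]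
  exact gaussDensity_le _

theorem norm_gaussDensity_sub_smul_smul_le (hσ : 0 < σ) (y : EuclideanSpace ℝ (Fin d)) :
    ‖gaussDensity d σ (x - α • y) • α • y‖ ≤ (2 * π * σ ^ 2) ^ (-(d : ℝ) / 2) * (σ + ‖x‖) := by
  set φ := gaussDensity d σ (x - α • y)
  have hφ : 0 ≤ φ := gaussDensity_nonneg _
  calc ‖φ • α • y‖ = φ * ‖x - (x - α • y)‖ := by
        rw [sub_sub_cancel, norm_smul, norm_of_nonneg hφ]
    _ ≤ φ * ‖x - α • y‖ + φ * ‖x‖ := by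
        rw [← mul_add, add_comm]; gcongr; exact norm_sub_le _ _
    _ ≤ (2 * π * σ ^ 2) ^ (-(d : ℝ) / 2) * σ + (2 * π * σ ^ 2) ^ (-(d : ℝ) / 2) * ‖x‖ :=
        add_le_add (gaussDensity_mul_norm_le hσ _) (by gcongr; exact gaussDensity_le _)
    _ = _ := by ring

theorem integrable_gaussDensity_sub_smul_smul (hσ : 0 < σ) (hα : α ≠ 0) :
    Integrable (fun y => gaussDensity d σ (x - α • y) • y) μ := by
  refine .of_bound (by fun_prop) ((2 * π * σ ^ 2) ^ (-(d : ℝ) / 2) * (σ + ‖x‖) / |α|)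
    (ae_of_all _ fun y => ?_)
  rw [le_div_iff₀ (abs_pos.2 hα), mul_comm, ← norm_eq_abs, ← norm_smul, smul_comm]
  exact norm_gaussDensity_sub_smul_smul_le α x hσ y

theorem hasGradientAt_integral_gaussDensity_sub_smul (hσ : 0 < σ) :
    HasGradientAt (fun x' => ∫ y, gaussDensity d σ (x' - α • y) ∂μ)
      (∫ y, (-gaussDensity d σ (x - α • y) / σ ^ 2) • (x - α • y) ∂μ) x := by
  set G := fun x' y => (-gaussDensity d σ (x' - α • y) / σ ^ 2) • (x' - α • y)
  have hG_le : ∀ x' y, ‖G x' y‖ ≤ (2 * π * σ ^ 2) ^ (-(d : ℝ) / 2) * σ / σ ^ 2 := fun x' y => by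
    rw [norm_smul, norm_div, norm_neg, norm_of_nonneg (gaussDensity_nonneg _),
      norm_of_nonneg (by positivity : (0 : ℝ) ≤ σ ^ 2), div_mul_eq_mul_div]
    exact div_le_div_of_nonneg_right (gaussDensity_mul_norm_le hσ _) (by positivity)
  have hG_int : Integrable (G x) μ := .of_bound (by fun_prop) _ (ae_of_all _ (hG_le x))
  -- `InnerProductSpace.toDual ℝ _ v` and `innerSL ℝ v` agree definitionally.
  have hderiv : ∀ y x',
      HasFDerivAt (fun z => gaussDensity d σ (z - α • y)) (innerSL ℝ (G x' y)) x' := fun y x' =>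
    (hasGradientAt_gaussDensity hσ _).hasFDerivAt.comp x' ((hasFDerivAt_id x').sub_const _)
  rw [hasGradientAt_iff_hasFDerivAt]
  refine (hasFDerivAt_integral_of_dominated_of_fderiv_le (μ := μ)
    (F' := fun x' y => innerSL ℝ (G x' y))
    (Filter.univ_mem) (Eventually.of_forall fun x' => by fun_prop)
    (integrable_gaussDensity_sub_smul α x) (by fun_prop)
    (ae_of_all _ fun y x' _ => (innerSL_apply_norm ℝ _).trans_le (hG_le x' y))
    (integrable_const _) (ae_of_all _ fun y x' _ => hderiv y x')).congr_fderiv ?_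
  exact (innerSL ℝ).integral_comp_comm hG_int

theorem gradient_log_integral_gaussDensity_sub_smul (hσ : 0 < σ) (hα : α ≠ 0)
    (hp : ∫ y, gaussDensity d σ (x - α • y) ∂μ ≠ 0) :
    gradient (fun x' => log (∫ y, gaussDensity d σ (x' - α • y) ∂μ)) x =
      (1 / σ ^ 2) • (-x + α • ((∫ y, gaussDensity d σ (x - α • y) ∂μ)⁻¹ •
        ∫ y, gaussDensity d σ (x - α • y) • y ∂μ)) := by
  rw [((hasGradientAt_integral_gaussDensity_sub_smul α x hσ).log hp).gradient]
  have hsplit : ∀ y, (-gaussDensity d σ (x - α • y) / σ ^ 2) • (x - α • y) =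
      (1 / σ ^ 2) • (α • gaussDensity d σ (x - α • y) • y - gaussDensity d σ (x - α • y) • x) :=
    fun y => by module
  simp_rw [hsplit]
  rw [integral_smul, integral_sub, integral_smul, integral_smul_const]
  · match_scalars <;> field_simp
  · exact (integrable_gaussDensity_sub_smul_smul α x hσ hα).smul α
  · exact (integrable_gaussDensity_sub_smul α x).smul_const x

end Smoothing

theorem ae_tendsto_average_comp {Ω E F : Type*} [MeasurableSpace Ω] {P : Measure Ω}
    [MeasurableSpace E] {μ : Measure E} [NormedAddCommGroup F] [NormedSpace ℝ F] [CompleteSpace F]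
    [MeasurableSpace F] [BorelSpace F] (X : ℕ → Ω → E) (hX : ∀ i, Measurable (X i))
    (hindep : iIndepFun X P) (hlaw : ∀ i, P.map (X i) = μ) {f : E → F} (hf : Measurable f)
    (hfμ : Integrable f μ) :
    ∀ᵐ ω ∂P, Tendsto (fun n : ℕ => (n : ℝ)⁻¹ • ∑ i ∈ Finset.range n, f (X i ω)) atTop
      (𝓝 (∫ y, f y ∂μ)) := by
  have hident : ∀ i, IdentDistrib (f ∘ X i) (f ∘ X 0) P P := fun i =>
    IdentDistrib.comp ⟨(hX i).aemeasurable, (hX 0).aemeasurable, by rw [hlaw i, hlaw 0]⟩ hf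
  have hint : Integrable (f ∘ X 0) P := ((hlaw 0).symm ▸ hfμ).comp_measurable (hX 0)
  have hmean : ∫ ω, f (X 0 ω) ∂P = ∫ y, f y ∂μ := by
    rw [← hlaw 0, integral_map (hX 0).aemeasurable (hlaw 0 ▸ hfμ.aestronglyMeasurable)]
  rw [← hmean]
  exact strong_law_ae (fun i => f ∘ X i) hint
    (fun i j hij => (hindep.indepFun hij).comp hf hf) hident

theorem tendsto_inv_max_smul_of_tendsto_average {E : Type*} [NormedAddCommGroup E]
    [NormedSpace ℝ E] {S : ℕ → ℝ} {V : ℕ → E} {p ε : ℝ} {v : E}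
    (hS : Tendsto (fun n : ℕ => (n : ℝ)⁻¹ • S n) atTop (𝓝 p))
    (hV : Tendsto (fun n : ℕ => (n : ℝ)⁻¹ • V n) atTop (𝓝 v)) (hp : p ≠ 0) (hεp : ε ≤ p) :
    Tendsto (fun n : ℕ => (max (S n) (n * ε))⁻¹ • V n) atTop (𝓝 (p⁻¹ • v)) := by
  have hmax : Tendsto (fun n : ℕ => max ((n : ℝ)⁻¹ • S n) ε) atTop (𝓝 p) := by
    simpa only [max_eq_left hεp] using hS.max (tendsto_const_nhds (x := ε))
  refine ((hmax.inv₀ hp).smul hV).congr' ?_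
  filter_upwards [eventually_gt_atTop 0] with n hn
  have hn' : (0 : ℝ) < n := Nat.cast_pos.2 hn
  rw [smul_smul, ← mul_inv, mul_comm, mul_max_of_nonneg _ _ hn'.le, smul_eq_mul,
    mul_inv_cancel_left₀ hn'.ne']

theorem stmt_5_general (d : ℕ) (α σ : ℝ) (hα : 0 < α) (hσ : 0 < σ)
    (μ : Measure (EuclideanSpace ℝ (Fin d))) [IsProbabilityMeasure μ]
    {Ω : Type*} [MeasurableSpace Ω] (P : Measure Ω)
    (X : ℕ → Ω → EuclideanSpace ℝ (Fin d)) (hXmeas : ∀ i, Measurable (X i))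
    (hindep : iIndepFun X P)
    (hlaw : ∀ i, Measure.map (X i) P = μ)
    (x : EuclideanSpace ℝ (Fin d)) (ε : ℝ) (hε : 0 < ε)
    (hεlt : ε < ∫ y, gaussDensity d σ (x - α • y) ∂μ) :
    ∀ᵐ ω ∂P, Filter.Tendsto
      (fun m : ℕ =>
        (1 / σ ^ 2) • (-x + α •
          ((max (∑ i ∈ Finset.range m, gaussDensity d σ (x - α • X i ω)) ((m : ℝ) * ε))⁻¹ •
            ∑ i ∈ Finset.range m, gaussDensity d σ (x - α • X i ω) • X i ω)))
      Filter.atTop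
      (nhds (gradient (fun x' => Real.log (∫ y, gaussDensity d σ (x' - α • y) ∂μ)) x)) := by
  have hp : 0 < ∫ y, gaussDensity d σ (x - α • y) ∂μ := hε.trans hεlt
  rw [gradient_log_integral_gaussDensity_sub_smul α x hσ hα.ne' hp.ne']
  have hφ : Continuous fun y => gaussDensity d σ (x - α • y) := by fun_prop
  filter_upwards [ae_tendsto_average_comp X hXmeas hindep hlaw hφ.measurable
      (integrable_gaussDensity_sub_smul α x),
    ae_tendsto_average_comp X hXmeas hindep hlaw (hφ.smul continuous_id).measurable
      (integrable_gaussDensity_sub_smul_smul α x hσ hα.ne')] with ω hS hV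
  exact (((tendsto_inv_max_smul_of_tendsto_average hS hV hp.ne' hεlt.le).const_smul α).const_add
    (-x)).const_smul (1 / σ ^ 2)

/-- for i.i.d. samples `X₁, X₂, …` from `μ` and `0 < ε < E[φ_σ(x − α X₁)]`, the
thresholded ratio estimator
`(1/σ²)(−x + α (∑_{i=1}^m φ_σ(x − α Xᵢ) Xᵢ) / max(∑_{i=1}^m φ_σ(x − α Xᵢ), m ε))`
converges almost surely, as `m → ∞`, to the score `∇ log p(x)` of
`p(x) = ∫ φ_σ(x − α y) dμ(y)`. -/
theorem stmt_5 (d : ℕ) (α σ : ℝ) (hα : 0 < α) (hσ : 0 < σ)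
    (μ : Measure (EuclideanSpace ℝ (Fin d))) [IsProbabilityMeasure μ]
    {Ω : Type*} [MeasurableSpace Ω] (P : Measure Ω) [IsProbabilityMeasure P]
    (X : ℕ → Ω → EuclideanSpace ℝ (Fin d)) (hXmeas : ∀ i, Measurable (X i))
    (hindep : iIndepFun X P)
    (hlaw : ∀ i, Measure.map (X i) P = μ)
    (x : EuclideanSpace ℝ (Fin d)) (ε : ℝ) (hε : 0 < ε)
    (hεlt : ε < ∫ y, gaussDensity d σ (x - α • y) ∂μ) :
    ∀ᵐ ω ∂P, Filter.Tendsto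
      (fun m : ℕ =>
        (1 / σ ^ 2) • (-x + α •
          ((max (∑ i ∈ Finset.range m, gaussDensity d σ (x - α • X i ω)) ((m : ℝ) * ε))⁻¹ •
            ∑ i ∈ Finset.range m, gaussDensity d σ (x - α • X i ω) • X i ω)))
      Filter.atTop
      (nhds (gradient (fun x' => Real.log (∫ y, gaussDensity d σ (x' - α • y) ∂μ)) x)) :=
  stmt_5_general d α σ hα hσ μ P X hXmeas hindep hlaw x ε hε hεlt
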